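/- (Strict variance decrease, result R1.) Let X be a nonnegative square-integrable real random variable, x > 0 and R ≥ 1 with p_{Rx} = P(X > R·x) satisfying 0 < p_{Rx} < 1, and suppose the conditional mean above the top threshold is strictly larger than the threshold, E[X·1{X > R·x}] > R·x·p_{Rx}. If x ≥ 2·E[X] / (1 + (2R − 1)·p_{Rx}), then the R-th marking step strictly decreases the variance: Var(X_R) < Var(X_{R−1}), where X_r := X − x·Σ_{i=1}^{r} 1{X > i·x}. -/

import Mathlib

open MeasureTheory ProbabilityTheory Finset
open scoped ProbabilityTheory

/-!
With `A = {X > R x}` and `p = P(A)` we have `X_R = X_{R-1} - x 1_A`, hence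
`Var X_R = Var X_{R-1} - 2x Cov(X_{R-1}, 1_A) + x² p (1 - p)`, and it suffices that
`2 Cov(X_{R-1}, 1_A) > x p (1 - p)`. On `A` all earlier marks are set, so `X_{R-1} = X - (R-1) x`
there, while `X_{R-1} ≤ X` everywhere. This bounds the covariance below by
`E[X 1_A] - p E[X] - (R-1) x p (1 - p)`, and the two hypotheses `E[X 1_A] > R x p` and
`2 E[X] ≤ x (1 + (2R-1) p)` make twice this bound exceed `x p (1 - p)`.
-/

/-- The marked-corrected variable `X_r := X − x·Σ_{i=1}^{r} 1{X > i·x}`. -/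
noncomputable def markedCorrected {Ω : Type*} (X : Ω → ℝ) (x : ℝ) (r : ℕ) : Ω → ℝ :=
  fun ω => X ω - x * ∑ i ∈ Finset.Icc 1 r, (if (i : ℝ) * x < X ω then (1 : ℝ) else 0)

lemma memLp_indicator_one {Ω : Type*} [MeasurableSpace Ω] {μ : Measure Ω} [IsFiniteMeasure μ]
    {s : Set Ω} (hs : MeasurableSet s) (p : ENNReal) : MemLp (s.indicator (1 : Ω → ℝ)) p μ :=
  memLp_indicator_const p hs 1 (.inr (measure_ne_top μ s))

section Indicator

variable {Ω : Type*} [MeasurableSpace Ω] {μ : Measure Ω} [IsProbabilityMeasure μ] {s : Set Ω}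

lemma variance_indicator_one (hs : MeasurableSet s) :
    Var[s.indicator 1; μ] = μ.real s * (1 - μ.real s) := by
  have hsq : s.indicator (1 : Ω → ℝ) ^ 2 = s.indicator 1 := by
    ext ω; by_cases h : ω ∈ s <;> simp [h]
  rw [variance_eq_sub (memLp_indicator_one hs 2), hsq, integral_indicator_one hs]
  ring

lemma variance_sub_const_mul_indicator {Y : Ω → ℝ} (hY : MemLp Y 2 μ) (hs : MeasurableSet s)
    (c : ℝ) :
    Var[fun ω ↦ Y ω - c * s.indicator 1 ω; μ]
      = Var[Y; μ] - 2 * c * cov[Y, s.indicator 1; μ] + c ^ 2 * (μ.real s * (1 - μ.real s)) := by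
  rw [variance_fun_sub hY ((memLp_indicator_one hs 2).const_mul c), covariance_const_mul_right,
    variance_const_mul, variance_indicator_one hs]
  ring

end Indicator

section MarkedCorrected

variable {Ω : Type*} {X : Ω → ℝ} {x : ℝ}

lemma markedCorrected_zero : markedCorrected X x 0 = X := by
  ext ω; simp [markedCorrected]

lemma markedCorrected_succ (r : ℕ) :
    markedCorrected X x (r + 1) = fun ω ↦
      markedCorrected X x r ω - x * {ω | ((r + 1 : ℕ) : ℝ) * x < X ω}.indicator 1 ω := by
  ext ω
  simp only [markedCorrected, sum_Icc_succ_top (Nat.le_add_left 1 r), Set.indicator_apply,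
    Set.mem_ofPred_eq, Pi.one_apply]
  ring

lemma markedCorrected_le_self (hx : 0 ≤ x) (r : ℕ) (ω : Ω) : markedCorrected X x r ω ≤ X ω :=
  sub_le_self _ <| mul_nonneg hx <| sum_nonneg fun _ _ ↦ by split_ifs <;> norm_num

lemma markedCorrected_eq_of_mul_lt (hx : 0 ≤ x) {r : ℕ} {ω : Ω} (h : (r : ℝ) * x < X ω) :
    markedCorrected X x r ω = X ω - r * x := by
  have hall : ∀ i ∈ Icc 1 r, (if (i : ℝ) * x < X ω then (1 : ℝ) else 0) = 1 := fun i hi ↦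
    if_pos <| (mul_le_mul_of_nonneg_right (by exact_mod_cast (mem_Icc.1 hi).2) hx).trans_lt h
  simp only [markedCorrected, sum_congr rfl hall, sum_const, Nat.card_Icc, nsmul_eq_mul, mul_one,
    add_tsub_cancel_right]
  ring

variable {s : Set Ω} {r : ℕ}

lemma markedCorrected_mul_indicator (hx : 0 ≤ x) (hs : s ⊆ {ω | r * x < X ω}) (ω : Ω) :
    markedCorrected X x r ω * s.indicator 1 ω = (X ω - r * x) * s.indicator 1 ω := by
  by_cases h : ω ∈ s
  · rw [markedCorrected_eq_of_mul_lt hx (hs h)]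
  · rw [Set.indicator_of_notMem h, mul_zero, mul_zero]

lemma markedCorrected_le_sub_mul_indicator (hx : 0 ≤ x) (hs : s ⊆ {ω | r * x < X ω}) (ω : Ω) :
    markedCorrected X x r ω ≤ X ω - r * x * s.indicator 1 ω := by
  by_cases h : ω ∈ s
  · rw [Set.indicator_of_mem h, Pi.one_apply, mul_one, markedCorrected_eq_of_mul_lt hx (hs h)]
  · rw [Set.indicator_of_notMem h, mul_zero, sub_zero]
    exact markedCorrected_le_self hx r ω

variable [MeasurableSpace Ω] {μ : Measure Ω}

lemma memLp_markedCorrected [IsFiniteMeasure μ] (hX : MemLp X 2 μ) (hm : Measurable X) (x : ℝ)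
    (r : ℕ) : MemLp (markedCorrected X x r) 2 μ := by
  induction r with
  | zero => rwa [markedCorrected_zero]
  | succ r ih =>
    rw [markedCorrected_succ]
    exact ih.sub <| (memLp_indicator_one (measurableSet_lt measurable_const hm) 2).const_mul x

lemma sub_le_covariance_markedCorrected_indicator [IsProbabilityMeasure μ] (hX : MemLp X 2 μ)
    (hm : Measurable X) (hx : 0 ≤ x) (hsm : MeasurableSet s) (hs : s ⊆ {ω | r * x < X ω}) :
    ∫ ω, X ω * s.indicator 1 ω ∂μ - μ.real s * μ[X] - r * x * (μ.real s * (1 - μ.real s))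
      ≤ cov[markedCorrected X x r, s.indicator 1; μ] := by
  have hB := memLp_indicator_one (μ := μ) hsm 2
  have hY := memLp_markedCorrected hX hm x r
  have hXB : Integrable (fun ω ↦ X ω * s.indicator 1 ω) μ := hX.integrable_mul hB
  have hrB : Integrable (fun ω ↦ r * x * s.indicator 1 ω) μ :=
    (hB.integrable one_le_two).const_mul _
  have hEYB : ∫ ω, markedCorrected X x r ω * s.indicator 1 ω ∂μ
      = ∫ ω, X ω * s.indicator 1 ω ∂μ - r * x * μ.real s := by
    calc ∫ ω, markedCorrected X x r ω * s.indicator 1 ω ∂μ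
        = ∫ ω, X ω * s.indicator 1 ω - r * x * s.indicator 1 ω ∂μ :=
          integral_congr_ae <| .of_forall fun ω ↦
            (markedCorrected_mul_indicator hx hs ω).trans (by ring)
      _ = ∫ ω, X ω * s.indicator 1 ω ∂μ - r * x * μ.real s := by
          rw [integral_sub hXB hrB, integral_const_mul, integral_indicator_one hsm]
  have hEY : μ[markedCorrected X x r] ≤ μ[X] - r * x * μ.real s := by
    calc μ[markedCorrected X x r]
        ≤ ∫ ω, X ω - r * x * s.indicator 1 ω ∂μ :=
          integral_mono (hY.integrable one_le_two) ((hX.integrable one_le_two).sub hrB)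
            (markedCorrected_le_sub_mul_indicator hx hs)
      _ = μ[X] - r * x * μ.real s := by
          rw [integral_sub (hX.integrable one_le_two) hrB, integral_const_mul,
            integral_indicator_one hsm]
  rw [covariance_eq_sub hY hB]
  simp only [Pi.mul_apply]
  rw [hEYB, integral_indicator_one hsm]
  linarith [mul_le_mul_of_nonneg_left hEY (measureReal_nonneg (μ := μ) (s := s))]

end MarkedCorrected

theorem marking_step_variance_strict_decrease_general
    {Ω : Type*} [MeasureSpace Ω] [IsProbabilityMeasure (ℙ : Measure Ω)]
    (X : Ω → ℝ) (hm : Measurable X) (hL : MemLp X 2 ℙ)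
    (x : ℝ) (hx : 0 < x) (R : ℕ) (hR : 1 ≤ R)
    (hcond : 𝔼[fun ω => X ω * (if (R : ℝ) * x < X ω then (1 : ℝ) else 0)]
        > (R : ℝ) * x * (ℙ {ω | (R : ℝ) * x < X ω}).toReal)
    (hthr : x ≥ 2 * 𝔼[X]
        / (1 + (2 * (R : ℝ) - 1) * (ℙ {ω | (R : ℝ) * x < X ω}).toReal)) :
    Var[markedCorrected X x R] < Var[markedCorrected X x (R - 1)] := by
  obtain ⟨r, rfl⟩ : ∃ r, R = r + 1 := ⟨R - 1, by omega⟩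
  rw [← measureReal_def] at hcond hthr
  set s := {ω | ((r + 1 : ℕ) : ℝ) * x < X ω}
  set p := (ℙ : Measure Ω).real s
  have hp : 0 ≤ p := measureReal_nonneg
  have hsm : MeasurableSet s := measurableSet_lt measurable_const hm
  have hs : s ⊆ {ω | r * x < X ω} := fun ω (h : _ < X ω) ↦
    lt_of_le_of_lt (by push_cast; linarith) h
  have hXB : ∫ ω, X ω * s.indicator 1 ω > ((r + 1 : ℕ) : ℝ) * x * p := by
    convert hcond using 3 with ω
    simp [s, Set.indicator_apply]
  have hmean : 2 * 𝔼[X] ≤ x * (1 + (2 * ((r + 1 : ℕ) : ℝ) - 1) * p) :=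
    (div_le_iff₀ (by push_cast; nlinarith)).1 hthr
  have hcov := sub_le_covariance_markedCorrected_indicator hL hm hx.le hsm hs
  have hcov_gt : x * (p * (1 - p)) < 2 * cov[markedCorrected X x r, s.indicator 1] := by
    push_cast at hXB hmean
    linarith [mul_le_mul_of_nonneg_left hmean hp]
  rw [Nat.add_sub_cancel, markedCorrected_succ, variance_sub_const_mul_indicator
    (memLp_markedCorrected hL hm x r) hsm]
  linarith [mul_lt_mul_of_pos_left hcov_gt hx]

/-- **Strict variance decrease (result R1).**
If `0 < p_{Rx} < 1`, `E[X·1{X > Rx}] > Rx·p_{Rx}` and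
`x ≥ 2·E[X]/(1 + (2R − 1)·p_{Rx})`, then the `R`-th marking step strictly
decreases the variance. -/
theorem marking_step_variance_strict_decrease
    {Ω : Type*} [MeasureSpace Ω] [IsProbabilityMeasure (ℙ : Measure Ω)]
    (X : Ω → ℝ) (hm : Measurable X) (hL : MemLp X 2 ℙ)
    (hpos : ∀ᵐ ω ∂(ℙ : Measure Ω), 0 ≤ X ω)
    (x : ℝ) (hx : 0 < x) (R : ℕ) (hR : 1 ≤ R)
    (hp0 : 0 < (ℙ {ω | (R : ℝ) * x < X ω}).toReal)
    (hp1 : (ℙ {ω | (R : ℝ) * x < X ω}).toReal < 1)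
    (hcond : 𝔼[fun ω => X ω * (if (R : ℝ) * x < X ω then (1 : ℝ) else 0)]
        > (R : ℝ) * x * (ℙ {ω | (R : ℝ) * x < X ω}).toReal)
    (hthr : x ≥ 2 * 𝔼[X]
        / (1 + (2 * (R : ℝ) - 1) * (ℙ {ω | (R : ℝ) * x < X ω}).toReal)) :
    Var[markedCorrected X x R] < Var[markedCorrected X x (R - 1)] :=
  marking_step_variance_strict_decrease_general X hm hL x hx R hR hcond hthr
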